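/- In the (D_n, C_1) lattice, set l^{(m)} := C_0 + Σ_{i=1}^m C_i for 0 ≤ m ≤ n−1 and F := 2C_0 + 2Σ_{i=1}^{n−2} C_i + C_{n−1} + C_n. Then the set I = { a ∈ ℤ^n : a_i ≥ 0 for all i and ⟨l(a), l(a)⟩ = −1 } consists exactly of the classes l^{(m)} (0 ≤ m ≤ n−1) together with the classes F − l^{(m)} (0 ≤ m ≤ n−1), identifying each class C_0 + Σ a_i C_i with its coefficient tuple a; in particular |I| = 2n. -/

import Mathlib

/-!
For `n ≥ 2` the form is minus a sum of `n` squares: `⟨x, x⟩ = -∑_{k<n} u_k(x)²`, where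
`u_k(x) = x_{k+1} - x_k` for `k ≠ n-2` and `u_{n-2}(x) = x_{n-1} - x_{n-2} + x_n`. So
`⟨l(a), l(a)⟩ = -1` iff `u(l(a)) = ±e_m` for some `m < n`. The system `u(l(a)) = v` is triangular,
so `u(l(a))` determines `a`. Finally `u(l⁽ᵐ⁾) = -e_m`, and as `F` spans the kernel of `u`,
`u(F - l⁽ᵐ⁾) = e_m`; all these classes have nonnegative coefficients.
-/

/-- The Gram matrix of the `(Dₙ, C_k)` lattice: basis `C₀, C₁, …, Cₙ` (index `i : Fin (n+1)`
corresponds to `Cᵢ`), with `⟨C₀,C₀⟩ = -1`, `⟨Cᵢ,Cᵢ⟩ = -2` for `1 ≤ i ≤ n`,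
`⟨Cᵢ,Cᵢ₊₁⟩ = 1` for `1 ≤ i ≤ n-2`, `⟨C_{n-2},Cₙ⟩ = 1`, `⟨C₀,C_k⟩ = 1`, and all other
off-diagonal entries `0`. -/
def gramD (n k : ℕ) (i j : Fin (n + 1)) : ℤ :=
  if i = j then (if (i : ℕ) = 0 then -1 else -2)
  else if (1 ≤ (i : ℕ) ∧ (j : ℕ) = (i : ℕ) + 1 ∧ (j : ℕ) < n)
      ∨ (1 ≤ (j : ℕ) ∧ (i : ℕ) = (j : ℕ) + 1 ∧ (i : ℕ) < n)
      ∨ ((i : ℕ) = n - 2 ∧ (j : ℕ) = n) ∨ ((j : ℕ) = n - 2 ∧ (i : ℕ) = n)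
      ∨ ((i : ℕ) = 0 ∧ (j : ℕ) = k) ∨ ((j : ℕ) = 0 ∧ (i : ℕ) = k) then 1
  else 0

/-- The symmetric bilinear form associated to a Gram matrix, on coordinate vectors. -/
def qform {m : ℕ} (g : Fin m → Fin m → ℤ) (x y : Fin m → ℤ) : ℤ :=
  ∑ i, ∑ j, x i * g i j * y j

/-- The class `l(a) = C₀ + ∑ aᵢ Cᵢ`, as a coordinate vector. -/
def lD (n : ℕ) (a : Fin n → ℤ) : Fin (n + 1) → ℤ := Fin.cons 1 a

/-- The set `I` of coefficient tuples `a ∈ ℤⁿ` with all `aᵢ ≥ 0` and `⟨l(a), l(a)⟩ = -1`. -/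
def ID (n k : ℕ) : Set (Fin n → ℤ) :=
  {a | (∀ i, 0 ≤ a i) ∧ qform (gramD n k) (lD n a) (lD n a) = -1}

/-- The coefficient tuple of `l⁽ᵐ⁾ = C₀ + ∑_{i=1}^m Cᵢ`: `m` ones followed by zeros. -/
def aDm (n m : ℕ) : Fin n → ℤ := fun i => if (i : ℕ) < m then 1 else 0

/-- The coefficients on `C₁, …, Cₙ` of `F = 2C₀ + 2∑_{i=1}^{n-2} Cᵢ + C_{n-1} + Cₙ`
(index `i : Fin n` corresponds to `C_{i+1}`). -/
def Fcoef (n : ℕ) : Fin n → ℤ := fun i => if (i : ℕ) + 3 ≤ n then 2 else 1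

open Finset

def zeroExtend {m : ℕ} (x : Fin m → ℤ) (i : ℕ) : ℤ := if h : i < m then x ⟨i, h⟩ else 0

lemma qform_eq_sum_range {m : ℕ} {g : Fin m → Fin m → ℤ} {G : ℕ → ℕ → ℤ}
    (hG : ∀ i j : Fin m, g i j = G i j) (x : Fin m → ℤ) :
    qform g x x = ∑ i ∈ range m, ∑ j ∈ range m, zeroExtend x i * G i j * zeroExtend x j := by
  have hx (i : Fin m) : x i = zeroExtend x i := by simp [zeroExtend]
  simp only [qform, hG, hx]
  rw [← Fin.sum_univ_eq_sum_range]
  exact sum_congr rfl fun i _ => (Fin.sum_univ_eq_sum_range (fun j => _ * G i j * _) m)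

def gramDiag (i j : ℕ) : ℤ := if i = j then (if i = 0 then -1 else -2) else 0

-- The edges `CᵢCᵢ₊₁` (`i + 1 < n`, including `C₀C₁`) and `Cₙ₋₂Cₙ` of the tree.
def gramEdge (n i j : ℕ) : ℤ :=
  (if j = i + 1 ∧ j < n then 1 else 0) + (if j = n ∧ i = n - 2 then 1 else 0)

lemma gramD_one_apply {n : ℕ} (hn : n ≠ 0) (i j : Fin (n + 1)) :
    gramD n 1 i j = gramDiag i j + gramEdge n i j + gramEdge n j i := by
  unfold gramD gramDiag gramEdge
  simp only [Fin.ext_iff]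
  split_ifs <;> omega

lemma sum_sum_mul_gramDiag (N : ℕ) (x : ℕ → ℤ) :
    ∑ i ∈ range (N + 1), ∑ j ∈ range (N + 1), x i * gramDiag i j * x j
      = -x 0 ^ 2 - 2 * ∑ i ∈ range N, x (i + 1) ^ 2 := by
  simp +contextual only [gramDiag, mul_ite, ite_mul, mul_zero, zero_mul, sum_ite_eq, if_true,
    sum_range_succ', Nat.succ_ne_zero, if_false, mul_sum]
  have h (i : ℕ) : x (i + 1) * -2 * x (i + 1) = -(2 * x (i + 1) ^ 2) := by ring
  simp only [h, sum_neg_distrib]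
  ring

lemma sum_sum_mul_gramEdge (n : ℕ) (x : ℕ → ℤ) :
    ∑ i ∈ range (n + 1), ∑ j ∈ range (n + 1), x i * gramEdge n i j * x j
      = ∑ i ∈ range (n - 1), x i * x (i + 1) + x (n - 2) * x n := by
  simp only [gramEdge, ite_and, mul_add, add_mul, sum_add_distrib, mul_ite, ite_mul, mul_zero,
    zero_mul, mul_one, sum_ite_eq', mem_range, lt_add_one, if_true,
    if_pos (show n - 2 < n + 1 by omega)]
  congr 1
  rw [← sum_filter, ← sum_filter]
  congr 1
  ext i
  simp only [mem_filter, mem_range]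
  omega

def diffCoord (n : ℕ) (x : ℕ → ℤ) (k : ℕ) : ℤ :=
  x (k + 1) - x k + if k + 2 = n then x n else 0

lemma sum_sq_diffCoord {n : ℕ} (hn : 2 ≤ n) (x : ℕ → ℤ) :
    ∑ k ∈ range n, diffCoord n x k ^ 2
      = x 0 ^ 2 + 2 * ∑ i ∈ range n, x (i + 1) ^ 2
        - 2 * (∑ i ∈ range (n - 1), x i * x (i + 1) + x (n - 2) * x n) := by
  obtain ⟨p, rfl⟩ : ∃ p, n = p + 2 := ⟨n - 2, by omega⟩
  have hchain : ∑ k ∈ range p, diffCoord (p + 2) x k ^ 2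
      = ∑ k ∈ range p, (x (k + 1) ^ 2 + x k ^ 2 - 2 * (x k * x (k + 1))) :=
    sum_congr rfl fun k hk => by
      rw [diffCoord, if_neg (by simp at hk; omega)]
      ring
  have hshift : ∑ k ∈ range p, x k ^ 2 + x p ^ 2 = x 0 ^ 2 + ∑ k ∈ range p, x (k + 1) ^ 2 := by
    rw [← sum_range_succ, sum_range_succ', add_comm]
  rw [sum_range_succ, sum_range_succ, hchain, sum_sub_distrib, sum_add_distrib, ← mul_sum]
  simp only [sum_range_succ _ (p + 1), sum_range_succ _ p, show p + 2 - 1 = p + 1 by omega,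
    show p + 2 - 2 = p by omega, diffCoord, if_pos, if_neg (show p + 1 + 2 ≠ p + 2 by omega)]
  linear_combination hshift

lemma qform_gramD_one {n : ℕ} (hn : 2 ≤ n) (x : Fin (n + 1) → ℤ) :
    qform (gramD n 1) x x = -∑ k ∈ range n, diffCoord n (zeroExtend x) k ^ 2 := by
  set X := zeroExtend x
  have htranspose : ∑ i ∈ range (n + 1), ∑ j ∈ range (n + 1), X i * gramEdge n j i * X j
      = ∑ i ∈ range (n + 1), ∑ j ∈ range (n + 1), X i * gramEdge n i j * X j := by
    rw [sum_comm]
    exact sum_congr rfl fun _ _ => sum_congr rfl fun _ _ => by ring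
  rw [qform_eq_sum_range (G := fun i j => gramDiag i j + gramEdge n i j + gramEdge n j i)
      (gramD_one_apply (by omega)), sum_sq_diffCoord hn]
  simp only [mul_add, add_mul, sum_add_distrib]
  rw [htranspose, sum_sum_mul_gramDiag, sum_sum_mul_gramEdge]
  ring

lemma exists_eq_one_or_neg_one_of_sum_sq_eq_one {ι : Type*} {s : Finset ι} {u : ι → ℤ}
    (h : ∑ i ∈ s, u i ^ 2 = 1) :
    ∃ k ∈ s, (u k = 1 ∨ u k = -1) ∧ ∀ j ∈ s, j ≠ k → u j = 0 := by
  classical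
  obtain ⟨k, hks, hk⟩ : ∃ k ∈ s, u k ≠ 0 := by
    by_contra! hzero
    rw [sum_eq_zero fun i hi => by rw [hzero i hi, zero_pow two_ne_zero]] at h
    exact zero_ne_one h
  have hpos : 0 < u k ^ 2 := by positivity
  have hrest : 0 ≤ ∑ j ∈ s.erase k, u j ^ 2 := sum_nonneg fun _ _ => sq_nonneg _
  rw [← add_sum_erase s _ hks] at h
  have hrest0 : ∑ j ∈ s.erase k, u j ^ 2 = 0 := by omega
  refine ⟨k, hks, sq_eq_one_iff.mp (by omega), fun j hjs hjk => ?_⟩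
  exact pow_eq_zero_iff two_ne_zero |>.mp <|
    (sum_eq_zero_iff_of_nonneg fun _ _ => sq_nonneg _).mp hrest0 j (mem_erase.mpr ⟨hjk, hjs⟩)

lemma eq_of_diffCoord_eq {n : ℕ} (hn : 2 ≤ n) {x y : ℕ → ℤ} (h0 : x 0 = y 0)
    (h : ∀ k < n, diffCoord n x k = diffCoord n y k) : ∀ i ≤ n, x i = y i := by
  have hchain : ∀ i ≤ n - 2, x i = y i := by
    intro i hi
    induction i with
    | zero => exact h0
    | succ i ih =>
      have hi' := h i (by omega)
      simp only [diffCoord, if_neg (show i + 2 ≠ n by omega)] at hi'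
      linarith [ih (by omega)]
  have hfork := h (n - 2) (by omega)
  have hlast := h (n - 1) (by omega)
  simp only [diffCoord, show n - 2 + 1 = n - 1 by omega, show n - 1 + 1 = n by omega,
    if_pos (show n - 2 + 2 = n by omega), if_neg (show n - 1 + 2 ≠ n by omega)] at hfork hlast
  have := hchain (n - 2) le_rfl
  intro i hi
  rcases show i ≤ n - 2 ∨ i = n - 1 ∨ i = n by omega with hi | rfl | rfl
  · exact hchain i hi
  all_goals linarith

lemma zeroExtend_lD {n : ℕ} (a : Fin n → ℤ) (i : ℕ) :
    zeroExtend (lD n a) i = if i = 0 then 1 else zeroExtend a (i - 1) := by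
  rcases i with _ | i
  · simp [zeroExtend, lD]
  · simp only [zeroExtend, lD, Nat.add_one_ne_zero, if_false, Nat.add_sub_cancel,
      Nat.add_lt_add_iff_right]
    split_ifs with hi
    · exact Fin.cons_succ (α := fun _ => ℤ) 1 a ⟨i, hi⟩
    · rfl

lemma lD_eq_of_diffCoord_eq {n : ℕ} (hn : 2 ≤ n) {a b : Fin n → ℤ}
    (h : ∀ k < n, diffCoord n (zeroExtend (lD n a)) k = diffCoord n (zeroExtend (lD n b)) k) :
    a = b := by
  funext i
  have := eq_of_diffCoord_eq hn (by simp [zeroExtend_lD]) h (i + 1) i.isLt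
  rw [zeroExtend_lD, zeroExtend_lD] at this
  simpa [zeroExtend] using this

lemma zeroExtend_aDm {n m : ℕ} (hm : m ≤ n) (i : ℕ) :
    zeroExtend (aDm n m) i = if i < m then 1 else 0 := by
  simp only [zeroExtend, aDm]
  split_ifs <;> omega

lemma zeroExtend_Fcoef_sub_aDm (n m i : ℕ) :
    zeroExtend (fun i => Fcoef n i - aDm n m i) i
      = if i < n then (if i + 3 ≤ n then 2 else 1) - (if i < m then 1 else 0) else 0 := by
  simp only [zeroExtend, aDm, Fcoef]
  split_ifs <;> rfl

lemma diffCoord_lD_aDm {n m k : ℕ} (hm : m < n) :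
    diffCoord n (zeroExtend (lD n (aDm n m))) k = -if k = m then 1 else 0 := by
  simp only [diffCoord, zeroExtend_lD, zeroExtend_aDm hm.le, Nat.add_one_ne_zero, if_false,
    Nat.add_sub_cancel]
  split_ifs <;> omega

lemma diffCoord_lD_Fcoef_sub_aDm {n m k : ℕ} (hn : 2 ≤ n) (hm : m < n) (hk : k < n) :
    diffCoord n (zeroExtend (lD n (fun i => Fcoef n i - aDm n m i))) k
      = if k = m then 1 else 0 := by
  simp only [diffCoord, zeroExtend_lD, zeroExtend_Fcoef_sub_aDm, Nat.add_one_ne_zero, if_false,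
    Nat.add_sub_cancel]
  split_ifs <;> omega

/-- `classL n (.inl m)` is `l⁽ᵐ⁾` and `classL n (.inr m)` is `F - l⁽ᵐ⁾`. -/
def classL (n : ℕ) : Fin n ⊕ Fin n → Fin n → ℤ :=
  Sum.elim (fun m => aDm n m) (fun m i => Fcoef n i - aDm n m i)

lemma classL_injective {n : ℕ} (hn : 2 ≤ n) : Function.Injective (classL n) := by
  have hcoord {a b : Fin n → ℤ} (h : a = b) (m : Fin n) :
      diffCoord n (zeroExtend (lD n a)) m = diffCoord n (zeroExtend (lD n b)) m := by rw [h]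
  refine Function.Injective.sumElim (fun m m' h => ?_) (fun m m' h => ?_) (fun m m' h => ?_)
  · have := hcoord h m
    simp only [diffCoord_lD_aDm m.isLt, diffCoord_lD_aDm m'.isLt] at this
    exact Fin.ext (by simpa using this)
  · have := hcoord h m
    simp only [diffCoord_lD_Fcoef_sub_aDm hn m.isLt m.isLt,
      diffCoord_lD_Fcoef_sub_aDm hn m'.isLt m.isLt] at this
    exact Fin.ext (by simpa using this)
  · have := hcoord h m
    simp only [diffCoord_lD_aDm m.isLt, diffCoord_lD_Fcoef_sub_aDm hn m'.isLt m.isLt] at this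
    split_ifs at this

lemma classL_nonneg (n : ℕ) (c : Fin n ⊕ Fin n) (i : Fin n) : 0 ≤ classL n c i := by
  rcases c with m | m <;> simp only [classL, Sum.elim_inl, Sum.elim_inr, aDm, Fcoef] <;>
    split_ifs <;> norm_num

lemma ID_one_eq_range {n : ℕ} (hn : 2 ≤ n) : ID n 1 = Set.range (classL n) := by
  ext a
  constructor
  · rintro ⟨-, hq⟩
    have hsum : ∑ k ∈ range n, diffCoord n (zeroExtend (lD n a)) k ^ 2 = 1 := by
      rw [qform_gramD_one hn] at hq
      linarith
    obtain ⟨m, hm, hsign, hzero⟩ := exists_eq_one_or_neg_one_of_sum_sq_eq_one hsum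
    rw [mem_range] at hm
    rcases hsign with h | h
    · refine ⟨.inr ⟨m, hm⟩, lD_eq_of_diffCoord_eq hn fun k hk => ?_⟩
      rw [classL, Sum.elim_inr, diffCoord_lD_Fcoef_sub_aDm hn hm hk]
      split_ifs with hkm
      · rw [hkm, h]
      · rw [hzero k (mem_range.mpr hk) hkm]
    · refine ⟨.inl ⟨m, hm⟩, lD_eq_of_diffCoord_eq hn fun k hk => ?_⟩
      rw [classL, Sum.elim_inl, diffCoord_lD_aDm hm]
      split_ifs with hkm
      · rw [hkm, h]
      · rw [hzero k (mem_range.mpr hk) hkm, neg_zero]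
  · rintro ⟨c, rfl⟩
    refine ⟨classL_nonneg n c, ?_⟩
    rw [qform_gramD_one hn]
    rcases c with ⟨m, hm⟩ | ⟨m, hm⟩
    · simp only [classL, Sum.elim_inl, diffCoord_lD_aDm hm]
      simp [hm]
    · rw [classL, Sum.elim_inr, sum_congr rfl fun k hk =>
        congrArg (· ^ 2) (diffCoord_lD_Fcoef_sub_aDm hn hm (mem_range.mp hk))]
      simp [hm]

lemma range_classL {n : ℕ} (hn : n ≠ 0) : Set.range (classL n) =
    {a : Fin n → ℤ | ∃ m ≤ n - 1, a = aDm n m ∨ a = fun i => Fcoef n i - aDm n m i} := by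
  ext a
  simp only [Set.mem_range, Set.mem_ofPred_eq, Sum.exists, classL, Sum.elim_inl, Sum.elim_inr]
  constructor
  · rintro (⟨m, rfl⟩ | ⟨m, rfl⟩)
    exacts [⟨m, by omega, Or.inl rfl⟩, ⟨m, by omega, Or.inr rfl⟩]
  · rintro ⟨m, hm, rfl | rfl⟩
    exacts [Or.inl ⟨⟨m, by omega⟩, rfl⟩, Or.inr ⟨⟨m, by omega⟩, rfl⟩]

/-- in the `(Dₙ, C₁)` lattice, with `l⁽ᵐ⁾ := C₀ + ∑_{i=1}^m Cᵢ` (`0 ≤ m ≤ n-1`)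
and `F := 2C₀ + 2∑_{i=1}^{n-2} Cᵢ + C_{n-1} + Cₙ`, the set `I` consists exactly of the
classes `l⁽ᵐ⁾` together with the classes `F - l⁽ᵐ⁾` (identified with their coefficient
tuples); in particular `|I| = 2n`. -/
theorem stmt8 (n : ℕ) (hn : 4 ≤ n) :
    ID n 1 = {a : Fin n → ℤ | ∃ m ≤ n - 1,
        a = aDm n m ∨ a = fun i => Fcoef n i - aDm n m i}
    ∧ (ID n 1).ncard = 2 * n := by
  rw [ID_one_eq_range (by omega), ← range_classL (by omega),
    Set.ncard_range_of_injective (classL_injective (by omega))]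
  simp [two_mul]
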